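/- For k a positive integer and S = sum over 2k-tuples (P_1, ..., P_{2k}) of monic irreducible polynomials with A < deg P_i <= B such that the product P_1...P_{2k} is a perfect square, of 1/(|P_1|...|P_{2k}|): one has S <= ((2k)!/(2^k k!)) * (sum over A < deg P <= B of 1/|P|^2)^k. -/
import Mathlib

open Finset

lemma poly_finite (F : Type*) [Field F] [Fintype F] (B : ℕ) :
    {p : Polynomial F | p.natDegree ≤ B}.Finite := by
  have : Set.InjOn (fun p : Polynomial F => (fun i : Fin (B+1) => p.coeff i)) {p | p.natDegree ≤ B} := by
    intro p hp r hr h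
    apply Polynomial.ext
    intro n
    by_cases hn : n ≤ B
    · exact congrFun h ⟨n, Nat.lt_succ_of_le hn⟩
    · rw [Polynomial.coeff_eq_zero_of_natDegree_lt (lt_of_le_of_lt hp (Nat.lt_of_not_le hn)),
        Polynomial.coeff_eq_zero_of_natDegree_lt (lt_of_le_of_lt hr (Nat.lt_of_not_le hn))]
  exact Set.Finite.of_finite_image (Set.toFinite _) this

lemma count_map_filter {α β} [DecidableEq β] (s : Finset α) (t : α → β) (p : β)
    [DecidablePred (fun i => t i = p)] :
    Multiset.count p (s.val.map t) = (s.filter (fun i => t i = p)).card := by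
  rw [Multiset.count_map,
    Multiset.filter_congr (fun a _ => (eq_comm : p = t a ↔ t a = p)),
    ← Finset.filter_val, ← Finset.card_def]

open scoped Classical in
lemma even_fibers {F : Type*} [Field F] {n : ℕ} (t : Fin n → Polynomial F)
    (h : ∀ i, (t i).Monic ∧ Irreducible (t i)) (hsq : IsSquare (∏ i, t i))
    (p : Polynomial F) :
    Even (Finset.univ.filter (fun i => t i = p)).card := by
  classical
  obtain ⟨s, hs⟩ := hsq
  set m : Multiset (Polynomial F) := Finset.univ.val.map t with hm
  have hprod : ∏ i, t i = m.prod := rfl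
  have hirr : ∀ a ∈ m, Irreducible a := by
    intro a ha
    obtain ⟨i, _, rfl⟩ := Multiset.mem_map.1 ha
    exact (h i).2
  have hnf : UniqueFactorizationMonoid.normalizedFactors m.prod = m.map normalize :=
    UniqueFactorizationMonoid.normalizedFactors_prod_eq m hirr
  have hmap : m.map normalize = m := by
    apply Multiset.map_congr rfl ?_ |>.trans (Multiset.map_id m)
    intro a ha
    obtain ⟨i, _, rfl⟩ := Multiset.mem_map.1 ha
    exact (h i).1.normalize_eq_self
  have hs0 : s ≠ 0 := by
    intro h0
    have : m.prod ≠ 0 := by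
      apply Multiset.prod_ne_zero
      intro h0'
      exact (hirr 0 h0').ne_zero rfl
    rw [← hprod] at this
    rw [hs, h0, mul_zero] at this
    exact this rfl
  have key : m = UniqueFactorizationMonoid.normalizedFactors s
      + UniqueFactorizationMonoid.normalizedFactors s := by
    rw [← UniqueFactorizationMonoid.normalizedFactors_mul hs0 hs0, ← hs, hprod, hnf, hmap]
  have hcount : m.count p = (Finset.univ.filter (fun i => t i = p)).card :=
    count_map_filter _ _ _
  rw [← hcount, key, Multiset.count_add]
  exact ⟨_, rfl⟩

lemma exists_pairing_aux {α β : Type*} [DecidableEq α] [DecidableEq β] (t : α → β) :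
    ∀ (k : ℕ) (s : Finset α), s.card = 2 * k →
    (∀ b, Even ((s.filter (fun a => t a = b)).card)) →
    ∃ g : Fin k × Bool → α, (∀ x, g x ∈ s) ∧ Function.Injective g ∧
      (∀ j, t (g (j, false)) = t (g (j, true))) := by
  intro k
  induction k with
  | zero =>
    intro s _ _
    exact ⟨fun x => x.1.elim0, fun x => x.1.elim0, fun x => x.1.elim0, fun j => j.elim0⟩
  | succ k ih =>
    intro s hcard heven
    have hne : s.Nonempty := by rw [← Finset.card_pos, hcard]; omega
    obtain ⟨a, ha⟩ := hne
    have hfib := heven (t a)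
    have hafib : a ∈ s.filter (fun x => t x = t a) := Finset.mem_filter.2 ⟨ha, rfl⟩
    have h2 : 2 ≤ (s.filter (fun x => t x = t a)).card := by
      rcases hfib with ⟨c, hc⟩
      have hpos : 0 < (s.filter (fun x => t x = t a)).card := Finset.card_pos.2 ⟨a, hafib⟩
      omega
    obtain ⟨a', ha'fib, hne'⟩ : ∃ a' ∈ s.filter (fun x => t x = t a), a' ≠ a := by
      have hpos : ((s.filter (fun x => t x = t a)).erase a).Nonempty := by
        rw [← Finset.card_pos, Finset.card_erase_of_mem hafib]; omega
      obtain ⟨a', ha'⟩ := hpos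
      exact ⟨a', Finset.mem_of_mem_erase ha', Finset.ne_of_mem_erase ha'⟩
    have ha's : a' ∈ s := (Finset.mem_filter.1 ha'fib).1
    have hta' : t a' = t a := (Finset.mem_filter.1 ha'fib).2
    set s' := (s.erase a).erase a' with hs'
    have ha'ea : a' ∈ s.erase a := Finset.mem_erase.2 ⟨hne', ha's⟩
    have hcard' : s'.card = 2 * k := by
      rw [hs', Finset.card_erase_of_mem ha'ea, Finset.card_erase_of_mem ha]; omega
    have hmem' : ∀ x ∈ s', x ∈ s ∧ x ≠ a ∧ x ≠ a' := by
      intro x hx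
      rw [hs', Finset.mem_erase, Finset.mem_erase] at hx
      exact ⟨hx.2.2, hx.2.1, hx.1⟩
    have heven' : ∀ b, Even ((s'.filter (fun x => t x = b)).card) := by
      intro b
      rw [hs', Finset.filter_erase, Finset.filter_erase]
      by_cases hb : t a = b
      · have h1 : a ∈ s.filter (fun x => t x = b) := Finset.mem_filter.2 ⟨ha, hb⟩
        have h2' : a' ∈ (s.filter (fun x => t x = b)).erase a :=
          Finset.mem_erase.2 ⟨hne', Finset.mem_filter.2 ⟨ha's, hta'.trans hb⟩⟩
        rw [Finset.card_erase_of_mem h2', Finset.card_erase_of_mem h1]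
        rcases heven b with ⟨c, hc⟩
        have hge : 0 < (s.filter (fun x => t x = b)).card := Finset.card_pos.2 ⟨a, h1⟩
        exact ⟨c - 1, by omega⟩
      · have h1 : a ∉ s.filter (fun x => t x = b) := fun h => hb (Finset.mem_filter.1 h).2
        have h2' : a' ∉ (s.filter (fun x => t x = b)).erase a := fun h =>
          hb (hta' ▸ (Finset.mem_filter.1 (Finset.mem_of_mem_erase h)).2)
        rw [Finset.erase_eq_of_notMem h2', Finset.erase_eq_of_notMem h1]
        exact heven b
    obtain ⟨g', hg'mem, hg'inj, hg'pair⟩ := ih s' hcard' heven'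
    refine ⟨fun x => if h : (x.1 : ℕ) < k then g' (⟨x.1, h⟩, x.2)
      else (if x.2 then a else a'), ?_, ?_, ?_⟩
    · intro x
      dsimp only
      split_ifs with h hb
      · exact (hmem' _ (hg'mem _)).1
      · exact ha
      · exact ha's
    · rintro ⟨x1, x2⟩ ⟨y1, y2⟩ hxy
      dsimp only at hxy
      by_cases hx : (x1 : ℕ) < k <;> by_cases hy : (y1 : ℕ) < k
      · rw [dif_pos hx, dif_pos hy] at hxy
        have := hg'inj hxy
        have h1 : (⟨(x1:ℕ), hx⟩ : Fin k) = ⟨(y1:ℕ), hy⟩ := congrArg Prod.fst this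
        have h2 : x2 = y2 := congrArg Prod.snd this
        have h3 : (x1 : ℕ) = (y1 : ℕ) := by injection h1
        exact Prod.ext (Fin.ext h3) h2
      · rw [dif_pos hx, dif_neg hy] at hxy
        exfalso
        rcases hmem' _ (hg'mem (⟨(x1:ℕ), hx⟩, x2)) with ⟨_, hna, hna'⟩
        cases y2 <;> simp_all
      · rw [dif_neg hx, dif_pos hy] at hxy
        exfalso
        rcases hmem' _ (hg'mem (⟨(y1:ℕ), hy⟩, y2)) with ⟨_, hna, hna'⟩
        cases x2 <;> simp_all
      · rw [dif_neg hx, dif_neg hy] at hxy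
        have h1 : (x1 : ℕ) = (y1 : ℕ) := by
          have := x1.isLt; have := y1.isLt; omega
        have h2 : x2 = y2 := by
          cases x2 <;> cases y2 <;> simp_all
        exact Prod.ext (Fin.ext h1) h2
    · intro j
      dsimp only
      by_cases h : (j : ℕ) < k
      · rw [dif_pos h, dif_pos h]
        exact hg'pair _
      · rw [dif_neg h, dif_neg h]
        simpa using hta'

lemma exists_pairing {β : Type*} [DecidableEq β] {k : ℕ} (t : Fin (2*k) → β)
    (heven : ∀ b, Even ((Finset.univ.filter (fun a => t a = b)).card)) :
    ∃ e : Fin (2*k) ≃ Fin k × Bool,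
      ∀ j, t (e.symm (j, false)) = t (e.symm (j, true)) := by
  obtain ⟨g, _, hinj, hpair⟩ := exists_pairing_aux t k Finset.univ (by simp) heven
  have hbij : Function.Bijective g :=
    (Fintype.bijective_iff_injective_and_card g).2 ⟨hinj, by simp [mul_comm]⟩
  refine ⟨(Equiv.ofBijective g hbij).symm, fun j => ?_⟩
  simpa [Equiv.ofBijective] using hpair j

def flipEquiv (c : Bool) : Bool ≃ Bool where
  toFun b := xor c b
  invFun b := xor c b
  left_inv b := by cases c <;> cases b <;> rfl
  right_inv b := by cases c <;> cases b <;> rfl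

def shear {k : ℕ} (π : Equiv.Perm (Fin k)) (c : Fin k → Bool) :
    (Fin k × Bool) ≃ (Fin k × Bool) where
  toFun x := (π x.1, xor (c x.1) x.2)
  invFun x := (π.symm x.1, xor (c (π.symm x.1)) x.2)
  left_inv := by
    rintro ⟨a, b⟩
    simp only [Equiv.symm_apply_apply]
    cases c a <;> cases b <;> rfl
  right_inv := by
    rintro ⟨a, b⟩
    simp only [Equiv.apply_symm_apply]
    cases c (π.symm a) <;> cases b <;> rfl

lemma core_bound {α : Type*} [DecidableEq α] (k : ℕ) (f : α → ℝ) (hf : ∀ p, 0 ≤ f p)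
    (Tf : Finset (Fin (2*k) → α)) (Df : Finset α)
    (hTD : ∀ t ∈ Tf, ∀ i, t i ∈ Df)
    (hTpair : ∀ t ∈ Tf, ∀ b, Even ((Finset.univ.filter (fun i => t i = b)).card)) :
    ∑ t ∈ Tf, ∏ i, f (t i) ≤
      ((Nat.factorial (2*k) : ℝ) / (2^k * Nat.factorial k)) *
        (∑ p ∈ Df, (f p)^2)^k := by
  classical
  set w : (Fin (2*k) → α) → ℝ := fun t => ∏ i, f (t i) with hw
  have hwnn : ∀ t, 0 ≤ w t := fun t => Finset.prod_nonneg (fun i _ => hf _)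
  set compat : (Fin (2*k) ≃ Fin k × Bool) → (Fin (2*k) → α) → Prop :=
    fun e t => ∀ j, t (e.symm (j, false)) = t (e.symm (j, true)) with hcompat
  -- Step A : each good tuple is compatible with at least 2^k k! pairings
  have stepA : ∀ t ∈ Tf, (2^k * Nat.factorial k : ℝ) ≤
      ((Finset.univ.filter (fun e => compat e t)).card : ℝ) := by
    intro t ht
    obtain ⟨e0, he0⟩ := exists_pairing t (hTpair t ht)
    set Φ : Equiv.Perm (Fin k) × (Fin k → Bool) → (Fin (2*k) ≃ Fin k × Bool) :=
      fun pf => e0.trans (shear pf.1 pf.2) with hΦ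
    have hsymm : ∀ π c j b, (Φ (π, c)).symm (j, b) =
        e0.symm (π.symm j, xor (c (π.symm j)) b) := by
      intro π c j b
      rfl
    have hmem : ∀ pf, Φ pf ∈ Finset.univ.filter (fun e => compat e t) := by
      rintro ⟨π, c⟩
      refine Finset.mem_filter.2 ⟨Finset.mem_univ _, fun j => ?_⟩
      rw [hsymm, hsymm]
      cases hb : c (π.symm j)
      · simpa using he0 (π.symm j)
      · simpa using (he0 (π.symm j)).symm
    have hinjΦ : Function.Injective Φ := by
      rintro ⟨π, c⟩ ⟨π', c'⟩ h
      have hz : ∀ z, shear π c z = shear π' c' z := by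
        intro z
        have h2 := congrArg (fun (e : Fin (2*k) ≃ Fin k × Bool) => e (e0.symm z)) h
        simpa [hΦ, Equiv.trans_apply] using h2
      have hπ : π = π' := by
        apply Equiv.ext
        intro j
        have := congrArg Prod.fst (hz (j, false))
        simpa [shear] using this
      have hc : c = c' := by
        funext j
        have := congrArg Prod.snd (hz (j, false))
        simpa [shear] using this
      simp [hπ, hc]
    have hcard : Fintype.card (Equiv.Perm (Fin k) × (Fin k → Bool)) ≤
        (Finset.univ.filter (fun e => compat e t)).card := by
      rw [← Finset.card_univ]
      exact Finset.card_le_card_of_injOn Φ (fun pf _ => hmem pf) hinjΦ.injOn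
    have hcardeq : Fintype.card (Equiv.Perm (Fin k) × (Fin k → Bool))
        = Nat.factorial k * 2^k := by
      simp [Fintype.card_perm]
    calc (2^k * Nat.factorial k : ℝ)
        = ((Nat.factorial k * 2^k : ℕ) : ℝ) := by push_cast; ring
      _ ≤ _ := by
          rw [← hcardeq]
          exact_mod_cast hcard
  -- Step C : for each pairing, the compatible sum is at most (∑ f²)^k
  have stepC : ∀ e : Fin (2*k) ≃ Fin k × Bool,
      ∑ t ∈ Tf.filter (fun t => compat e t), w t ≤ (∑ p ∈ Df, (f p)^2)^k := by
    intro e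
    have hrw : (∑ p ∈ Df, (f p)^2)^k
        = ∑ v ∈ Fintype.piFinset (fun _ : Fin k => Df), ∏ j, (f (v j))^2 := by
      calc (∑ p ∈ Df, (f p)^2)^k
          = ∏ _j : Fin k, ∑ p ∈ Df, (f p)^2 := by
            rw [Finset.prod_const, Finset.card_univ, Fintype.card_fin]
        _ = ∑ v ∈ Fintype.piFinset (fun _ : Fin k => Df), ∏ j, (f (v j))^2 :=
            Finset.prod_univ_sum _ _
    rw [hrw]
    set Φe : (Fin (2*k) → α) → (Fin k → α) := fun t j => t (e.symm (j, true)) with hΦe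
    have hkey : ∀ t ∈ Tf.filter (fun t => compat e t), ∀ i, t i = Φe t (e i).1 := by
      intro t ht i
      have hc : compat e t := (Finset.mem_filter.1 ht).2
      cases hb : (e i).2
      · have h1 : t i = t (e.symm ((e i).1, false)) := by
          rw [← hb, Prod.mk.eta, Equiv.symm_apply_apply]
        rw [h1, hΦe]
        exact hc (e i).1
      · have h1 : t i = t (e.symm ((e i).1, true)) := by
          rw [← hb, Prod.mk.eta, Equiv.symm_apply_apply]
        rw [h1, hΦe]
    have hval : ∀ t ∈ Tf.filter (fun t => compat e t), w t = ∏ j, (f (Φe t j))^2 := by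
      intro t ht
      have hc : compat e t := (Finset.mem_filter.1 ht).2
      rw [hw]
      dsimp only
      rw [← Equiv.prod_comp e.symm (fun i => f (t i)), Fintype.prod_prod_type]
      apply Finset.prod_congr rfl
      intro j _
      rw [Fintype.prod_bool, hc j, hΦe, sq]
    calc ∑ t ∈ Tf.filter (fun t => compat e t), w t
        = ∑ t ∈ Tf.filter (fun t => compat e t), ∏ j, (f (Φe t j))^2 :=
          Finset.sum_congr rfl hval
      _ = ∑ v ∈ (Tf.filter (fun t => compat e t)).image Φe, ∏ j, (f (v j))^2 := by
          rw [Finset.sum_image]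
          intro t1 h1 t2 h2 hEq
          funext i
          rw [hkey t1 h1 i, hkey t2 h2 i, hEq]
      _ ≤ ∑ v ∈ Fintype.piFinset (fun _ : Fin k => Df), ∏ j, (f (v j))^2 := by
          apply Finset.sum_le_sum_of_subset_of_nonneg
          · rw [Finset.image_subset_iff]
            intro t ht
            rw [Fintype.mem_piFinset]
            intro j
            exact hTD t (Finset.mem_filter.1 ht).1 _
          · intro v _ _
            exact Finset.prod_nonneg (fun j _ => sq_nonneg _)
  -- main chain
  have key : (2^k * Nat.factorial k : ℝ) * (∑ t ∈ Tf, w t)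
      ≤ (Nat.factorial (2*k) : ℝ) * (∑ p ∈ Df, (f p)^2)^k := by
    calc (2^k * Nat.factorial k : ℝ) * (∑ t ∈ Tf, w t)
        = ∑ t ∈ Tf, (2^k * Nat.factorial k : ℝ) * w t := Finset.mul_sum _ _ _
      _ ≤ ∑ t ∈ Tf, ((Finset.univ.filter (fun e => compat e t)).card : ℝ) * w t :=
          Finset.sum_le_sum (fun t ht => mul_le_mul_of_nonneg_right (stepA t ht) (hwnn t))
      _ = ∑ t ∈ Tf, ∑ e : Fin (2*k) ≃ Fin k × Bool, (if compat e t then w t else 0) := by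
          apply Finset.sum_congr rfl
          intro t _
          rw [Finset.sum_ite, Finset.sum_const, Finset.sum_const_zero, add_zero, nsmul_eq_mul]
      _ = ∑ e : Fin (2*k) ≃ Fin k × Bool, ∑ t ∈ Tf, (if compat e t then w t else 0) :=
          Finset.sum_comm
      _ = ∑ e : Fin (2*k) ≃ Fin k × Bool, ∑ t ∈ Tf.filter (fun t => compat e t), w t := by
          apply Finset.sum_congr rfl
          intro e _
          rw [Finset.sum_filter]
      _ ≤ ∑ _e : Fin (2*k) ≃ Fin k × Bool, (∑ p ∈ Df, (f p)^2)^k :=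
          Finset.sum_le_sum (fun e _ => stepC e)
      _ = (Nat.factorial (2*k) : ℝ) * (∑ p ∈ Df, (f p)^2)^k := by
          rw [Finset.sum_const, Finset.card_univ, nsmul_eq_mul]
          congr 1
          rw [Fintype.card_equiv (Fintype.equivOfCardEq (by simp [mul_comm]))]
          simp
  have hpos : (0:ℝ) < 2^k * Nat.factorial k := by positivity
  rw [div_mul_eq_mul_div, le_div_iff₀ hpos, mul_comm]
  exact key

theorem square_tuple_sum_bound (F : Type*) [Field F] [Fintype F] (q : ℕ)
    (hq : Fintype.card F = q) (k : ℕ) (hk : 0 < k) (A B : ℕ) (hAB : A < B) :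
    (∑ᶠ t ∈ {t : Fin (2 * k) → Polynomial F |
        (∀ i, (t i).Monic ∧ Irreducible (t i) ∧
          A < (t i).natDegree ∧ (t i).natDegree ≤ B) ∧
        IsSquare (∏ i, t i)},
      ∏ i, (1 : ℝ) / (q : ℝ) ^ (t i).natDegree)
    ≤ ((Nat.factorial (2 * k) : ℝ) / (2 ^ k * Nat.factorial k)) *
      (∑ᶠ P ∈ {p : Polynomial F | p.Monic ∧ Irreducible p ∧
          A < p.natDegree ∧ p.natDegree ≤ B},
        1 / ((q : ℝ) ^ P.natDegree) ^ 2) ^ k := by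
  classical
  set D : Set (Polynomial F) :=
    {p : Polynomial F | p.Monic ∧ Irreducible p ∧ A < p.natDegree ∧ p.natDegree ≤ B} with hD
  set T : Set (Fin (2 * k) → Polynomial F) :=
    {t : Fin (2 * k) → Polynomial F |
      (∀ i, (t i).Monic ∧ Irreducible (t i) ∧
        A < (t i).natDegree ∧ (t i).natDegree ≤ B) ∧ IsSquare (∏ i, t i)} with hT
  have hDfin : D.Finite := (poly_finite F B).subset (fun p hp => hp.2.2.2)
  have hTfin : T.Finite := by
    apply Set.Finite.subset (Set.Finite.pi (fun _ : Fin (2*k) => hDfin))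
    intro t ht
    rw [Set.mem_pi]
    intro i _
    exact ⟨(ht.1 i).1, (ht.1 i).2.1, (ht.1 i).2.2.1, (ht.1 i).2.2.2⟩
  rw [finsum_mem_eq_finite_toFinset_sum _ hTfin, finsum_mem_eq_finite_toFinset_sum _ hDfin]
  have hbody : ∀ p : Polynomial F,
      (1 : ℝ) / ((q : ℝ) ^ p.natDegree) ^ 2 = ((1 : ℝ) / (q : ℝ) ^ p.natDegree) ^ 2 := by
    intro p
    rw [div_pow, one_pow]
  rw [Finset.sum_congr rfl (fun p _ => hbody p)]
  apply core_bound k (fun p => (1 : ℝ) / (q : ℝ) ^ p.natDegree)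
    (fun p => div_nonneg one_pos.le (by positivity)) hTfin.toFinset hDfin.toFinset
  · intro t ht i
    rw [Set.Finite.mem_toFinset] at ht
    rw [Set.Finite.mem_toFinset]
    exact ⟨(ht.1 i).1, (ht.1 i).2.1, (ht.1 i).2.2.1, (ht.1 i).2.2.2⟩
  · intro t ht b
    rw [Set.Finite.mem_toFinset] at ht
    have h := even_fibers t (fun i => ⟨(ht.1 i).1, (ht.1 i).2.1⟩) ht.2 b
    convert h using 2
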